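/- arXiv:2107.11825 — 2 statements merged into one kernel-verified Lean document; each statement's English description precedes it below -/
import Mathlib

section
/- Let f ∈ ℚ[x₁,…,xₙ] satisfy: (a) the infimum of f over ℝⁿ is attained, and (b) the gradient ideal I_grad(f) is zero-dimensional and radical. Then f is non-negative on ℝⁿ if and only if f is a weighted sum of squares of polynomials with rational coefficients modulo I_grad(f), i.e., f = Σⱼ cⱼ qⱼ² + Σᵢ φᵢ ∂f/∂xᵢ with cⱼ ∈ ℚ positive and qⱼ, φᵢ ∈ ℚ[x₁,…,xₙ]. -/
/-!
Since the gradient ideal `I` has finitely many complex zeros, `ℚ[x]/I` has finitely many maximal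
ideals (each residue field embeds in `ℂ`), hence Krull dimension zero, hence is finite-dimensional
over `ℚ`; being reduced, it is a finite product of number fields. If `f ≥ 0` on `ℝⁿ` but the image
of `f` in one of these fields `L` were not a sum of squares, some ordering of `L` would make it
negative (Artin–Schreier). That ordering is archimedean since `L` is algebraic over `ℚ`, so it
comes from an embedding `L → ℝ`, which yields a real point where `f < 0`. Conversely, a weighted
sum of squares modulo `I` is non-negative at every critical point of `f`, in particular at a
global minimiser.
-/

theorem IsSumSq.map {R S F : Type*} [NonUnitalNonAssocSemiring R] [NonUnitalNonAssocSemiring S]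
    [FunLike F R S] [NonUnitalRingHomClass F R S] (f : F) {s : R} (hs : IsSumSq s) :
    IsSumSq (f s) := by
  induction hs with
  | zero => simp
  | sq_add a _ ih => rw [map_add, map_mul]; exact .sq_add _ ih

theorem IsSumSq.piSingle {ι : Type*} [DecidableEq ι] {R : ι → Type*}
    [∀ i, NonUnitalNonAssocSemiring (R i)] (i : ι) {s : R i} (hs : IsSumSq s) :
    IsSumSq (Pi.single i s) := by
  induction hs with
  | zero => simp
  | sq_add a _ ih => rw [Pi.single_add, Pi.single_mul]; exact .sq_add _ ih

theorem IsSumSq.pi {ι : Type*} [Finite ι] {R : ι → Type*}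
    [∀ i, NonUnitalNonAssocSemiring (R i)] {s : ∀ i, R i} (hs : ∀ i, IsSumSq (s i)) :
    IsSumSq s := by
  classical
  have := Fintype.ofFinite ι
  rw [← Finset.univ_sum_single s]
  exact IsSumSq.sum fun i _ => (hs i).piSingle i

theorem IsSumSq.exists_fin_sum_sq {R : Type*} [CommSemiring R] {s : R} (hs : IsSumSq s) :
    ∃ (m : ℕ) (q : Fin m → R), s = ∑ j, q j ^ 2 := by
  induction hs with
  | zero => exact ⟨0, ![], by simp⟩
  | sq_add a _ ih =>
    obtain ⟨m, q, rfl⟩ := ih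
    exact ⟨m + 1, Fin.cons a q, by simp [Fin.sum_univ_succ, sq]⟩

theorem isSumSq_of_isSumSq_neg_one {F : Type*} [Field F] [NeZero (2 : F)]
    (h : IsSumSq (-1 : F)) (a : F) : IsSumSq a := by
  have h2 : (2 : F) ≠ 0 := two_ne_zero
  have : a = ((a + 1) / 2) ^ 2 + (-1) * ((a - 1) / 2) ^ 2 := by field_simp; ring
  rw [this]
  exact .add (IsSquare.isSumSq ⟨_, sq _⟩) (h.mul (IsSquare.isSumSq ⟨_, sq _⟩))

namespace RingPreordering

section CommRing

variable {R : Type*} [CommRing R]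

theorem exists_le_isMax (P : RingPreordering R) : ∃ Q, P ≤ Q ∧ IsMax Q := by
  suffices ∀ c ⊆ Set.univ, IsChain (· ≤ ·) c → ∀ Q ∈ c, ∃ ub ∈ Set.univ, ∀ P ∈ c, P ≤ ub by
    obtain ⟨Q, hPQ, hQ⟩ := zorn_le_nonempty₀ Set.univ this P trivial
    exact ⟨Q, hPQ, fun Q' h => hQ.2 trivial h⟩
  intro c _ hc Q hQ
  have mem_common {x y : R} (hx : x ∈ ⋃ P ∈ c, (P : Set R)) (hy : y ∈ ⋃ P ∈ c, (P : Set R)) :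
      ∃ P ∈ c, x ∈ P ∧ y ∈ P := by
    simp only [Set.mem_iUnion, SetLike.mem_coe, exists_prop] at hx hy
    obtain ⟨⟨P₁, hP₁, hx⟩, ⟨P₂, hP₂, hy⟩⟩ := And.intro hx hy
    rcases hc.total hP₁ hP₂ with h | h
    exacts [⟨P₂, hP₂, h hx, hy⟩, ⟨P₁, hP₁, hx, h hy⟩]
  refine ⟨mk' (⋃ P ∈ c, (P : Set R)) (fun hx hy => ?_) (fun hx hy => ?_)
    (fun x => Set.mem_biUnion hQ (Q.mul_self_mem x)) ?_, trivial,
    fun P hP x hx => Set.mem_biUnion hP hx⟩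
  · obtain ⟨P, hP, hx, hy⟩ := mem_common hx hy
    exact Set.mem_biUnion hP (add_mem hx hy)
  · obtain ⟨P, hP, hx, hy⟩ := mem_common hx hy
    exact Set.mem_biUnion hP (mul_mem hx hy)
  · simpa using fun P _ => P.neg_one_notMem

end CommRing

variable {F : Type*} [Field F]

instance : RingConeClass (RingPreordering F) F where
  eq_zero_of_mem_of_neg_mem := RingPreordering.eq_zero_of_mem_of_neg_mem

def adjoin (P : RingPreordering F) {a : F} (ha : -a ∉ P) : RingPreordering F :=
  mk' {x | ∃ p ∈ P, ∃ q ∈ P, x = p + a * q}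
    (by
      rintro _ _ ⟨p, hp, q, hq, rfl⟩ ⟨p', hp', q', hq', rfl⟩
      exact ⟨p + p', add_mem hp hp', q + q', add_mem hq hq', by ring⟩)
    (by
      rintro _ _ ⟨p, hp, q, hq, rfl⟩ ⟨p', hp', q', hq', rfl⟩
      refine ⟨p * p' + a * a * (q * q'), add_mem (mul_mem hp hp') ?_,
        p * q' + q * p', add_mem (mul_mem hp hq') (mul_mem hq hp'), by ring⟩
      exact mul_mem (P.mul_self_mem a) (mul_mem hq hq'))
    (fun x => ⟨x * x, P.mul_self_mem x, 0, zero_mem P, by ring⟩)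
    (by
      rintro ⟨p, hp, q, hq, h⟩
      rcases eq_or_ne q 0 with rfl | hq0
      · obtain rfl : p = -1 := by simpa using h.symm
        exact P.neg_one_notMem hp
      · apply ha
        have : -a = (1 + p) * q * (q⁻¹ * q⁻¹) := by
          field_simp
          linear_combination h
        rw [this]
        exact mul_mem (mul_mem (add_mem (one_mem P) hp) hq) (P.mul_self_mem _))

theorem le_adjoin (P : RingPreordering F) {a : F} (ha : -a ∉ P) : P ≤ P.adjoin ha :=
  fun p hp => ⟨p, hp, 0, zero_mem P, by ring⟩

theorem mem_adjoin (P : RingPreordering F) {a : F} (ha : -a ∉ P) : a ∈ P.adjoin ha :=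
  ⟨0, zero_mem P, 1, one_mem P, by ring⟩

theorem hasMemOrNegMem_of_isMax {P : RingPreordering F} (hP : IsMax P) : HasMemOrNegMem P where
  mem_or_neg_mem _ := or_iff_not_imp_right.mpr fun ha => hP (P.le_adjoin ha) (P.mem_adjoin ha)

def sumSq (h : ¬ IsSumSq (-1 : F)) : RingPreordering F :=
  mk' {x | IsSumSq x} (fun hx hy => hx.add hy) (fun hx hy => hx.mul hy)
    (fun x => .mul_self x) h

end RingPreordering

open RingPreordering in
theorem exists_linearOrder_lt_zero_of_not_isSumSq {F : Type*} [Field F] [NeZero (2 : F)]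
    {a : F} (ha : ¬ IsSumSq a) :
    ∃ (_ : LinearOrder F) (_ : IsStrictOrderedRing F), a < 0 := by
  have h₁ : ¬ IsSumSq (-1 : F) := fun h => ha (isSumSq_of_isSumSq_neg_one h a)
  have h₂ : -(-a) ∉ sumSq h₁ := by simpa [sumSq] using ha
  obtain ⟨P, hP, hPmax⟩ := ((sumSq h₁).adjoin h₂).exists_le_isMax
  have : HasMemOrNegMem P := hasMemOrNegMem_of_isMax hPmax
  classical
  let _ : LinearOrder F := .mkOfAddGroupCone P
  have : IsOrderedRing F := .mkOfCone P
  refine ⟨inferInstance, IsOrderedRing.toIsStrictOrderedRing F, lt_of_le_of_ne ?_ ?_⟩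
  · show 0 - a ∈ P
    simpa using hP (mem_adjoin _ h₂)
  · rintro rfl
    exact ha .zero

theorem Polynomial.Monic.le_sum_abs_coeff_of_isRoot {R : Type*} [CommRing R] [LinearOrder R]
    [IsStrictOrderedRing R] {p : Polynomial R} (hp : p.Monic) {x : R} (hx : p.IsRoot x)
    (hx₁ : 1 ≤ x) : x ≤ ∑ i ∈ Finset.range p.natDegree, |p.coeff i| := by
  set d := p.natDegree
  have hd : d ≠ 0 := fun hd => by
    rw [hp.natDegree_eq_zero.mp hd] at hx
    simp at hx
  have hxd : x ^ d + ∑ i ∈ Finset.range d, p.coeff i * x ^ i = 0 := by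
    rw [← hx.eq_zero, Polynomial.eval_eq_sum_range, Finset.sum_range_succ, hp.coeff_natDegree,
      one_mul, add_comm]
  have hpos : 0 < x ^ (d - 1) := pow_pos (zero_lt_one.trans_le hx₁) _
  refine le_of_mul_le_mul_right ?_ hpos
  calc x * x ^ (d - 1) = x ^ d := by rw [← pow_succ', Nat.sub_add_cancel (Nat.pos_of_ne_zero hd)]
    _ = ∑ i ∈ Finset.range d, -(p.coeff i * x ^ i) := by
      rw [Finset.sum_neg_distrib]; linear_combination hxd
    _ ≤ ∑ i ∈ Finset.range d, |p.coeff i| * x ^ (d - 1) := by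
      gcongr with i hi
      rw [← neg_mul]
      exact mul_le_mul (neg_le_abs _) (pow_le_pow_right₀ hx₁ (by grind))
        (pow_nonneg (zero_le_one.trans hx₁) _) (abs_nonneg _)
    _ = (∑ i ∈ Finset.range d, |p.coeff i|) * x ^ (d - 1) := (Finset.sum_mul ..).symm

theorem archimedean_of_isAlgebraic_rat (K : Type*) [Field K] [LinearOrder K]
    [IsStrictOrderedRing K] [Algebra ℚ K] [Algebra.IsAlgebraic ℚ K] : Archimedean K := by
  refine archimedean_iff_nat_le.mpr fun x => ?_
  set q := minpoly ℚ x
  have hq : q.Monic := minpoly.monic (Algebra.IsIntegral.isIntegral x)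
  set S : ℚ := ∑ i ∈ Finset.range q.natDegree, |q.coeff i|
  refine ⟨⌈max 1 S⌉₊, ?_⟩
  have hS : ((max 1 S : ℚ) : K) ≤ ⌈max 1 S⌉₊ := by exact_mod_cast Nat.le_ceil _
  refine le_trans ?_ hS
  rcases le_or_gt x 1 with hx | hx
  · exact hx.trans (by exact_mod_cast le_max_left _ _)
  · have := (hq.map (algebraMap ℚ K)).le_sum_abs_coeff_of_isRoot
      (by simp [q, Polynomial.eval_map_algebraMap]) hx.le
    refine this.trans (le_of_eq_of_le ?_ (Rat.cast_le.mpr (le_max_right 1 S)))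
    simp [S, hq.natDegree_map, Polynomial.coeff_map]

theorem exists_ringHom_real_lt_zero_of_not_isSumSq {K : Type*} [Field K] [Algebra ℚ K]
    [Algebra.IsAlgebraic ℚ K] {a : K} (ha : ¬ IsSumSq a) : ∃ σ : K →+* ℝ, σ a < 0 := by
  have : CharZero K := charZero_of_injective_algebraMap (algebraMap ℚ K).injective
  obtain ⟨_, _, ha₀⟩ := exists_linearOrder_lt_zero_of_not_isSumSq ha
  have := archimedean_of_isAlgebraic_rat K
  let σ := ConditionallyCompleteLinearOrderedField.inducedOrderRingHom K ℝ
  refine ⟨σ, ?_⟩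
  simpa using σ.monotone'.strictMono_of_injective σ.toRingHom.injective ha₀

theorem Module.finite_of_finite_algHom (k A K : Type*) [Field k] [CommRing A] [Algebra k A]
    [Algebra.FiniteType k A] [Field K] [IsAlgClosed K] [Algebra k K] [Finite (A →ₐ[k] K)] :
    Module.Finite k A := by
  have : IsJacobsonRing A := isJacobsonRing_of_finiteType (A := k)
  -- By Zariski's lemma every residue field at a maximal ideal is finite over `k`, so embeds in `K`.
  have hker : ∀ M : {I : Ideal A | I.IsMaximal}, ∃ φ : A →ₐ[k] K, RingHom.ker φ = M := by
    rintro ⟨M, hM⟩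
    have : M.IsMaximal := hM
    let := Ideal.Quotient.field M
    have := finite_of_finite_type_of_isJacobsonRing k (A ⧸ M)
    let ι : (A ⧸ M) →ₐ[k] K := IsAlgClosed.lift
    refine ⟨ι.comp (Ideal.Quotient.mkₐ k M), Ideal.ext fun x => ?_⟩
    simp [map_eq_zero_iff ι ι.toRingHom.injective, Ideal.Quotient.eq_zero_iff_mem]
  choose φ hφ using hker
  have : Finite {I : Ideal A | I.IsMaximal} :=
    _root_.Finite.of_injective φ fun M N h => Subtype.ext ((hφ M).symm.trans (h ▸ hφ N))
  -- In a Jacobson ring the maximal ideals cut out the nilradical; finitely many of them force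
  -- every prime to be maximal.
  have : DiscreteTopology (PrimeSpectrum A) := by
    refine PrimeSpectrum.discreteTopology_iff_finite_isMaximal_and_sInf_le_nilradical.mpr
      ⟨this, ?_⟩
    rw [nilradical, Ideal.radical_eq_jacobson, Ideal.jacobson]
    simp
  exact (Module.finite_iff_krullDimLE_zero k A).mpr
    (PrimeSpectrum.discreteTopology_iff_finite_and_krullDimLE_zero.mp this).2

theorem MvPolynomial.finite_algHom_quotient_span {k K σ ι : Type*} [CommRing k] [CommRing K]
    [Algebra k K] (g : ι → MvPolynomial σ k)
    (h : {x : σ → K | ∀ i, aeval x (g i) = 0}.Finite) :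
    Finite (MvPolynomial σ k ⧸ Ideal.span (Set.range g) →ₐ[k] K) := by
  have := h.to_subtype
  let I := Ideal.span (Set.range g)
  have hφ (φ : MvPolynomial σ k ⧸ I →ₐ[k] K) (p : MvPolynomial σ k) :
      φ (Ideal.Quotient.mk I p) = aeval (fun j => φ (Ideal.Quotient.mk I (X j))) p :=
    DFunLike.congr_fun (aeval_unique (φ.comp (Ideal.Quotient.mkₐ k I))) p
  let point (φ : MvPolynomial σ k ⧸ I →ₐ[k] K) : {x : σ → K | ∀ i, aeval x (g i) = 0} :=
    ⟨fun j => φ (Ideal.Quotient.mk I (X j)), fun i => by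
      rw [← hφ, Ideal.Quotient.eq_zero_iff_mem.mpr (Ideal.subset_span (Set.mem_range_self i)),
        map_zero]⟩
  refine Finite.of_injective point fun φ ψ h => ?_
  exact Ideal.Quotient.algHom_ext k (algHom_ext fun j => congr_fun (congrArg Subtype.val h) j)

theorem isSumSq_of_forall_ringHom_real_nonneg {A : Type*} [CommRing A] [Algebra ℚ A]
    [Module.Finite ℚ A] [IsReduced A] {a : A} (h : ∀ ψ : A →+* ℝ, 0 ≤ ψ a) : IsSumSq a := by
  have : IsArtinianRing A := IsArtinianRing.of_finite ℚ A
  let e := (IsArtinianRing.equivPi A).toRingEquiv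
  suffices IsSumSq (e a) by simpa using this.map e.symm
  refine IsSumSq.pi fun M => by_contra fun hM => ?_
  let := Ideal.Quotient.field M.asIdeal
  obtain ⟨σ, hσ⟩ := exists_ringHom_real_lt_zero_of_not_isSumSq hM
  exact (h (σ.comp ((Pi.evalRingHom _ M).comp e.toRingHom))).not_gt hσ

theorem MvPolynomial.ringHom_apply_eq_aeval {σ S : Type*} [CommRing S] [Algebra ℚ S]
    (ψ : MvPolynomial σ ℚ →+* S) (p : MvPolynomial σ ℚ) :
    ψ p = aeval (fun j => ψ (X j)) p :=
  DFunLike.congr_fun (aeval_unique ψ.toRatAlgHom) p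

namespace MvPolynomial

variable {σ R : Type*} [CommSemiring R] [Algebra R ℝ]

/-- The line `t ↦ x + t • Pi.single i 1`, with coordinates polynomials in `t`. -/
noncomputable def coordLine [DecidableEq σ] (x : σ → ℝ) (i : σ) : σ → Polynomial ℝ :=
  fun j => Polynomial.C (x j) + if j = i then Polynomial.X else 0

theorem eval_zero_coordLine [DecidableEq σ] (x : σ → ℝ) (i : σ) :
    (fun j => (coordLine x i j).eval 0) = x := by
  ext j
  rcases eq_or_ne j i with rfl | hj <;> simp [coordLine, *]

theorem eval_aeval_polynomial (L : σ → Polynomial ℝ) (p : MvPolynomial σ R) (t : ℝ) :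
    (aeval L p).eval t = aeval (fun j => (L j).eval t) p := by
  induction p using MvPolynomial.induction_on with
  | C a => simp [Polynomial.algebraMap_apply]
  | add p q hp hq => simp [hp, hq]
  | mul_X p j hp => simp [hp]

theorem derivative_aeval_coordLine [DecidableEq σ] (x : σ → ℝ) (i : σ) (p : MvPolynomial σ R) :
    Polynomial.derivative (aeval (coordLine x i) p) = aeval (coordLine x i) (pderiv i p) := by
  induction p using MvPolynomial.induction_on with
  | C a => simp
  | add p q hp hq => simp [hp, hq]
  | mul_X p j hp =>
    rcases eq_or_ne j i with rfl | hj
    · simp [hp, pderiv_X, coordLine]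
      ring
    · simp [hp, pderiv_X, hj, coordLine]
      ring

theorem aeval_pderiv_eq_zero_of_forall_le {x₀ : σ → ℝ} {p : MvPolynomial σ R}
    (h : ∀ x, aeval x₀ p ≤ aeval x p) (i : σ) : aeval x₀ (pderiv i p) = 0 := by
  classical
  have hmin : IsLocalMin (fun t => (aeval (coordLine x₀ i) p).eval t) 0 :=
    .of_forall fun t => by simpa only [eval_aeval_polynomial, eval_zero_coordLine] using h _
  have := hmin.deriv_eq_zero
  rwa [Polynomial.deriv, derivative_aeval_coordLine, eval_aeval_polynomial,
    eval_zero_coordLine] at this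

end MvPolynomial

theorem exists_eq_sum_sq_add_of_isSumSq_mk {R ι : Type*} [CommRing R] [Fintype ι] {g : ι → R}
    {a : R} (h : IsSumSq (Ideal.Quotient.mk (Ideal.span (Set.range g)) a)) :
    ∃ (s : ℕ) (q : Fin s → R) (φ : ι → R), a = ∑ j, q j ^ 2 + ∑ i, φ i * g i := by
  obtain ⟨s, q, hq⟩ := h.exists_fin_sum_sq
  choose Q hQ using fun j => Ideal.Quotient.mk_surjective (q j)
  have : a - ∑ j, Q j ^ 2 ∈ Ideal.span (Set.range g) := Ideal.Quotient.eq.mp (by simp [hq, hQ])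
  obtain ⟨φ, hφ⟩ := Ideal.mem_span_range_iff_exists_fun.mp this
  exact ⟨s, Q, φ, by rw [hφ]; ring⟩

/-- Main theorem: for f ∈ ℚ[x₁,…,xₙ] attaining its infimum over ℝⁿ, with zero-dimensional
radical gradient ideal, f is non-negative on ℝⁿ iff f is a weighted SOS of polynomials with
rational coefficients modulo the gradient ideal. -/
theorem nonneg_iff_sos_mod_gradient (n : ℕ) (f : MvPolynomial (Fin n) ℚ)
    (hinf : ∃ xstar : Fin n → ℝ,
      ∀ x : Fin n → ℝ, MvPolynomial.aeval xstar f ≤ MvPolynomial.aeval x f)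
    (hfin : {x : Fin n → ℂ | ∀ i, MvPolynomial.aeval x (MvPolynomial.pderiv i f) = 0}.Finite)
    (hrad : (Ideal.span (Set.range fun i => MvPolynomial.pderiv i f)).IsRadical) :
    (∀ x : Fin n → ℝ, 0 ≤ MvPolynomial.aeval x f) ↔
    ∃ (s : ℕ) (c : Fin s → ℚ) (q : Fin s → MvPolynomial (Fin n) ℚ)
      (φ : Fin n → MvPolynomial (Fin n) ℚ),
      (∀ j, 0 < c j) ∧
      f = (∑ j, MvPolynomial.C (c j) * (q j) ^ 2) + ∑ i, φ i * MvPolynomial.pderiv i f := by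
  set I := Ideal.span (Set.range fun i => MvPolynomial.pderiv i f)
  constructor
  · intro hf
    have := MvPolynomial.finite_algHom_quotient_span _ hfin
    have := Module.finite_of_finite_algHom ℚ (MvPolynomial (Fin n) ℚ ⧸ I) ℂ
    have := (Ideal.isRadical_iff_quotient_reduced I).mp hrad
    obtain ⟨s, q, φ, hsos⟩ := exists_eq_sum_sq_add_of_isSumSq_mk <|
      isSumSq_of_forall_ringHom_real_nonneg fun ψ =>
        (MvPolynomial.ringHom_apply_eq_aeval (ψ.comp (Ideal.Quotient.mk I)) f).symm ▸ hf _
    exact ⟨s, 1, q, φ, fun _ => one_pos, by simpa using hsos⟩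
  · rintro ⟨s, c, q, φ, hc, hf⟩ x
    obtain ⟨x₀, hx₀⟩ := hinf
    refine le_trans ?_ (hx₀ x)
    rw [hf]
    simp only [map_add, map_sum, map_mul, map_pow, MvPolynomial.aeval_C,
      MvPolynomial.aeval_pderiv_eq_zero_of_forall_le hx₀, mul_zero, Finset.sum_const_zero, add_zero]
    exact Finset.sum_nonneg fun j _ => mul_nonneg (by simpa using (hc j).le) (sq_nonneg _)
end

section
/- The dehomogenized Robinson polynomial f_R = x₁⁶ + x₂⁶ − x₁⁴x₂² + 3x₁²x₂² − x₁²x₂⁴ − x₁⁴ − x₂⁴ − x₁² − x₂² + 1 is non-negative on ℝ², but is not a sum of squares of polynomials in ℝ[x₁,x₂]. -/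
/-!
With `u = x₁²` and `v = x₂²` the polynomial is `(u + v - 1)(u - v)² + (u - 1)(v - 1)`,
which is nonnegative for `u, v ≥ 0` and vanishes at `(±1, 0), (0, ±1), (±1, ±1)`.

Suppose `f_R = ∑ qᵢ²`. The top-degree homogeneous components of the `qᵢ` cannot cancel in a
sum of squares, so `deg qᵢ ≤ 3`, and each `qᵢ` vanishes at the eight zeros of `f_R`. Every
polynomial `p` of degree at most `3` satisfies the cubature rule
`4 p(0, 0) + ∑ p(±1, ±1) = 2 ∑ (p(±1, 0) + p(0, ±1))`, so `qᵢ(0, 0) = 0` for all `i`,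
contradicting `f_R(0, 0) = 1`.
-/

open MvPolynomial Finset

namespace MvPolynomial

variable {σ R : Type*}

section CommSemiring

variable [CommSemiring R]

theorem homogeneousComponent_mul_of_totalDegree_le {p q : MvPolynomial σ R} {m n : ℕ}
    (hp : p.totalDegree ≤ m) (hq : q.totalDegree ≤ n) :
    homogeneousComponent (m + n) (p * q) =
      homogeneousComponent m p * homogeneousComponent n q := by
  classical
  ext α
  by_cases hα : α.degree = m + n
  · rw [coeff_homogeneousComponent, if_pos hα, coeff_mul, coeff_mul]
    refine sum_congr rfl fun βγ hβγ => ?_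
    have hsum : βγ.1.degree + βγ.2.degree = m + n := by
      rw [← map_add, mem_antidiagonal.mp hβγ, hα]
    simp only [coeff_homogeneousComponent]
    by_cases hβ : βγ.1.degree = m
    · rw [if_pos hβ, if_pos (by omega)]
    · rw [if_neg hβ, zero_mul]
      rcases lt_or_gt_of_ne hβ with hlt | hgt
      · rw [coeff_eq_zero_of_totalDegree_lt (hq.trans_lt (show n < βγ.2.degree by omega)),
          mul_zero]
      · rw [coeff_eq_zero_of_totalDegree_lt (hp.trans_lt hgt), zero_mul]
  · rw [coeff_homogeneousComponent, if_neg hα,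
      ((homogeneousComponent_isHomogeneous m p).mul
        (homogeneousComponent_isHomogeneous n q)).coeff_eq_zero hα]

theorem homogeneousComponent_totalDegree_ne_zero {p : MvPolynomial σ R} (hp : p ≠ 0) :
    homogeneousComponent p.totalDegree p ≠ 0 := by
  obtain ⟨α, hα, hdeg⟩ :=
    exists_mem_eq_sup p.support (support_nonempty.mpr hp) fun s => s.sum fun _ e => e
  intro h
  have := congrArg (coeff α) h
  rw [coeff_homogeneousComponent, if_pos (show α.degree = p.totalDegree from hdeg.symm),
    coeff_zero] at this
  exact mem_support_iff.mp hα this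

end CommSemiring

section LinearOrderedField

variable [Field R] [LinearOrder R] [IsStrictOrderedRing R] {ι : Type*} {s : Finset ι}
  {q : ι → MvPolynomial σ R}

theorem eval_eq_zero_of_eval_sum_sq_eq_zero {x : σ → R} (h : eval x (∑ i ∈ s, q i ^ 2) = 0)
    {i : ι} (hi : i ∈ s) : eval x (q i) = 0 := by
  simp only [map_sum, sq, map_mul] at h
  exact (sum_mul_self_eq_zero_iff s _).mp h i hi

theorem sum_sq_eq_zero_iff : ∑ i ∈ s, q i ^ 2 = 0 ↔ ∀ i ∈ s, q i = 0 :=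
  ⟨fun h i hi => funext fun x => by
      simpa using eval_eq_zero_of_eval_sum_sq_eq_zero (x := x) (by rw [h, map_zero]) hi,
    fun h => sum_eq_zero fun i hi => by simp [h i hi]⟩

theorem totalDegree_le_of_totalDegree_sum_sq_le {d : ℕ}
    (h : (∑ i ∈ s, q i ^ 2).totalDegree ≤ 2 * d) {i : ι} (hi : i ∈ s) :
    (q i).totalDegree ≤ d := by
  obtain ⟨j, hj, hmax⟩ := exists_max_image s (fun i => (q i).totalDegree) ⟨i, hi⟩
  refine (hmax i hi).trans (not_lt.mp fun hdj => ?_)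
  have hqj : q j ≠ 0 := by
    rintro hqj
    simp [hqj] at hdj
  have hlead : ∑ i ∈ s, homogeneousComponent (q j).totalDegree (q i) ^ 2 = 0 := calc
    _ = homogeneousComponent ((q j).totalDegree + (q j).totalDegree) (∑ i ∈ s, q i ^ 2) := by
      simp only [map_sum, sq]
      exact sum_congr rfl fun i hi =>
        (homogeneousComponent_mul_of_totalDegree_le (hmax i hi) (hmax i hi)).symm
    _ = 0 := homogeneousComponent_eq_zero _ _ (by omega)
  exact homogeneousComponent_totalDegree_ne_zero hqj (sum_sq_eq_zero_iff.mp hlead j hj)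

end LinearOrderedField

theorem cubature_of_totalDegree_le_three [CommRing R] {p : MvPolynomial (Fin 2) R}
    (hp : p.totalDegree ≤ 3) :
    4 * eval 0 p + (eval ![1, 1] p + eval ![1, -1] p + eval ![-1, 1] p + eval ![-1, -1] p) =
      2 * (eval ![1, 0] p + eval ![-1, 0] p + eval ![0, 1] p + eval ![0, -1] p) := by
  rw [p.as_sum]
  simp only [map_sum, mul_sum, ← sum_add_distrib]
  refine sum_congr rfl fun α hα => ?_
  have hdeg : α 0 + α 1 ≤ 3 := by
    simpa [Finsupp.sum_fintype] using (le_totalDegree hα).trans hp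
  simp only [eval_monomial, Finsupp.prod_pow, Fin.prod_univ_two, Matrix.cons_val_zero,
    Matrix.cons_val_one, Pi.zero_apply]
  generalize α 0 = m at hdeg ⊢
  generalize α 1 = n at hdeg ⊢
  have : m ≤ 3 := by omega
  have : n ≤ 3 := by omega
  interval_cases m <;> interval_cases n <;> first | omega | ring

end MvPolynomial

noncomputable def robinson : MvPolynomial (Fin 2) ℝ :=
  X 0 ^ 6 + X 1 ^ 6 - X 0 ^ 4 * X 1 ^ 2 + 3 * X 0 ^ 2 * X 1 ^ 2 - X 0 ^ 2 * X 1 ^ 4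
    - X 0 ^ 4 - X 1 ^ 4 - X 0 ^ 2 - X 1 ^ 2 + 1

theorem eval_robinson (x : Fin 2 → ℝ) :
    eval x robinson = (x 0 ^ 2 + x 1 ^ 2 - 1) * (x 0 ^ 2 - x 1 ^ 2) ^ 2
      + (x 0 ^ 2 - 1) * (x 1 ^ 2 - 1) := by
  simp only [robinson, map_add, map_sub, map_mul, map_pow, map_one, map_ofNat, eval_X]
  ring

theorem eval_robinson_nonneg (x : Fin 2 → ℝ) : 0 ≤ eval x robinson := by
  rw [eval_robinson]
  have hu : 0 ≤ x 0 ^ 2 := sq_nonneg _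
  have hv : 0 ≤ x 1 ^ 2 := sq_nonneg _
  generalize x 0 ^ 2 = u at hu ⊢
  generalize x 1 ^ 2 = v at hv ⊢
  -- with `s = u + v` the right side is
  -- `(s - 1)²(s + 1) + uv(5 - 4s) = (s - 2)²/4 + (u - v)²(4s - 5)/4`
  rcases le_total (4 * (u + v)) 5 with hs | hs
  · nlinarith [mul_nonneg (mul_nonneg hu hv) (sub_nonneg.2 hs),
      mul_nonneg (sq_nonneg (u + v - 1)) (by linarith : (0 : ℝ) ≤ u + v + 1)]
  · nlinarith [sq_nonneg (u + v - 2), mul_nonneg (sq_nonneg (u - v)) (sub_nonneg.2 hs)]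

theorem totalDegree_robinson_le : robinson.totalDegree ≤ 6 := by
  have hX (i : Fin 2) (n : ℕ) : (X i ^ n : MvPolynomial (Fin 2) ℝ).totalDegree ≤ n :=
    (totalDegree_X_pow i n).le
  have hmul {p q : MvPolynomial (Fin 2) ℝ} {m n : ℕ} (hp : p.totalDegree ≤ m)
      (hq : q.totalDegree ≤ n) : (p * q).totalDegree ≤ m + n :=
    (totalDegree_mul p q).trans (add_le_add hp hq)
  have h3 : (3 : MvPolynomial (Fin 2) ℝ).totalDegree ≤ 0 := (totalDegree_C 3).le
  unfold robinson
  refine (totalDegree_add _ _).trans (max_le ?_ (totalDegree_one.trans_le (Nat.zero_le _)))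
  refine (totalDegree_sub _ _).trans (max_le ?_ ((hX 1 2).trans (by norm_num)))
  refine (totalDegree_sub _ _).trans (max_le ?_ ((hX 0 2).trans (by norm_num)))
  refine (totalDegree_sub _ _).trans (max_le ?_ ((hX 1 4).trans (by norm_num)))
  refine (totalDegree_sub _ _).trans (max_le ?_ ((hX 0 4).trans (by norm_num)))
  refine (totalDegree_sub _ _).trans (max_le ?_ (hmul (hX 0 2) (hX 1 4)))
  refine (totalDegree_add _ _).trans
    (max_le ?_ ((hmul (hmul h3 (hX 0 2)) (hX 1 2)).trans (by norm_num)))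
  refine (totalDegree_sub _ _).trans (max_le ?_ (hmul (hX 0 4) (hX 1 2)))
  exact (totalDegree_add _ _).trans (max_le (hX 0 6) (hX 1 6))

open MvPolynomial in
/-- The dehomogenized Robinson polynomial is non-negative on ℝ² but is not a sum of
squares of polynomials in ℝ[x₁,x₂]. -/
theorem robinson_nonneg_not_sos :
    (∀ x : Fin 2 → ℝ, 0 ≤ MvPolynomial.eval x
      ((X 0) ^ 6 + (X 1) ^ 6 - (X 0) ^ 4 * (X 1) ^ 2 + 3 * (X 0) ^ 2 * (X 1) ^ 2
        - (X 0) ^ 2 * (X 1) ^ 4 - (X 0) ^ 4 - (X 1) ^ 4 - (X 0) ^ 2 - (X 1) ^ 2 + 1 :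
        MvPolynomial (Fin 2) ℝ)) ∧
    ¬ ∃ (s : ℕ) (q : Fin s → MvPolynomial (Fin 2) ℝ),
      ((X 0) ^ 6 + (X 1) ^ 6 - (X 0) ^ 4 * (X 1) ^ 2 + 3 * (X 0) ^ 2 * (X 1) ^ 2
        - (X 0) ^ 2 * (X 1) ^ 4 - (X 0) ^ 4 - (X 1) ^ 4 - (X 0) ^ 2 - (X 1) ^ 2 + 1 :
        MvPolynomial (Fin 2) ℝ) = ∑ i, (q i) ^ 2 := by
  change (∀ x, 0 ≤ eval x robinson) ∧
    ¬∃ (s : ℕ) (q : Fin s → MvPolynomial (Fin 2) ℝ), robinson = ∑ i, q i ^ 2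
  refine ⟨eval_robinson_nonneg, fun ⟨s, q, hq⟩ => ?_⟩
  have hdeg (i : Fin s) : (q i).totalDegree ≤ 3 :=
    totalDegree_le_of_totalDegree_sum_sq_le (d := 3) (hq ▸ totalDegree_robinson_le)
      (mem_univ i)
  have hroot {x : Fin 2 → ℝ} (hx : eval x robinson = 0) (i : Fin s) : eval x (q i) = 0 :=
    eval_eq_zero_of_eval_sum_sq_eq_zero (hq ▸ hx) (mem_univ i)
  have hcenter (i : Fin s) : eval 0 (q i) = 0 := by
    have h := cubature_of_totalDegree_le_three (hdeg i)
    simp (disch := norm_num [eval_robinson]) only [hroot] at h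
    simpa using h
  have h0 := congrArg (eval 0) hq
  rw [eval_robinson, map_sum] at h0
  simp only [map_pow, hcenter] at h0
  norm_num at h0
end
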